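/- arXiv:1404.1199 — 2 statements merged into one kernel-verified Lean document; each statement's English description precedes it below -/
import Mathlib

section
/- Let n ≥ 2k ≥ 0 and let w be a permutation of {1,...,n}. Then w satisfies the condition that for every 1 ≤ i ≤ n, either w(i) = 1, or w(i) = n−k+1, or there exists j < i with w(j) = w(i) − 1, if and only if w = w_{ℓ_1,...,ℓ_k} for some 1 ≤ ℓ_1 < ℓ_2 < ... < ℓ_k ≤ n. -/
open scoped BigOperators

/-- The permutation `w_{ℓ₁,…,ℓₖ}` of `{1,…,n}` (as a function `ℕ → ℕ`):
`w i = n - k + j` if `i = ℓ j` for some `1 ≤ j ≤ k`, and `w i = i - j` if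
`ℓ j < i < ℓ (j+1)` (with conventions `ℓ 0 = 0`, `ℓ (k+1) = n+1`); here `j`
is recovered as the number of `r ∈ {1,…,k}` with `ℓ r ≤ i` (resp. `ℓ r < i`). -/
def wPerm (n k : ℕ) (ℓ : ℕ → ℕ) (i : ℕ) : ℕ :=
  if ∃ j ∈ Finset.Icc 1 k, ℓ j = i then
    n - k + ((Finset.Icc 1 k).filter fun j => ℓ j ≤ i).card
  else
    i - ((Finset.Icc 1 k).filter fun j => ℓ j < i).card

/-- The conditions `1 ≤ ℓ 1 < ℓ 2 < ⋯ < ℓ k ≤ n`. -/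
def goodL (n k : ℕ) (ℓ : ℕ → ℕ) : Prop :=
  (∀ j ∈ Finset.Icc 1 k, 1 ≤ ℓ j ∧ ℓ j ≤ n) ∧
    ∀ j j' : ℕ, 1 ≤ j → j < j' → j' ≤ k → ℓ j < ℓ j'

/-!
Write `u` for the inverse of `w` on `{1, …, n}`. Reading the condition at `i = u v`, it says
exactly that `u (v - 1) < u v` for every `v ∉ {1, n - k + 1}`, i.e. that `u` is increasing on
the blocks `[1, n - k]` and `[n - k + 1, n]`. Such a `w` is pinned down by the positions
`ℓ j = u (n - k + j)` of its large values: it sends the `j`-th of them to `n - k + j` and the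
remaining positions, in increasing order, to `1, …, n - k`. That is exactly `w_ℓ`, because
`i - #{j | ℓ j < i}` is the rank of an unmarked position `i` among the unmarked positions.
-/

open scoped Finset

section Rank

variable {g : ℕ → ℕ} {m j : ℕ}

lemma filter_Icc_apply_le_apply (hg : StrictMonoOn g (Set.Icc 1 m)) (hj : j ∈ Set.Icc 1 m) :
    {r ∈ Finset.Icc 1 m | g r ≤ g j} = Finset.Icc 1 j := by
  ext r
  simp only [Finset.mem_filter, Finset.mem_Icc]
  constructor
  · rintro ⟨hr, hle⟩
    exact ⟨hr.1, (hg.le_iff_le hr hj).1 hle⟩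
  · rintro ⟨h1, h2⟩
    have hr : r ∈ Set.Icc 1 m := ⟨h1, h2.trans hj.2⟩
    exact ⟨hr, (hg.le_iff_le hr hj).2 h2⟩

lemma card_filter_Icc_apply_le_apply (hg : StrictMonoOn g (Set.Icc 1 m))
    (hj : j ∈ Set.Icc 1 m) : #{r ∈ Finset.Icc 1 m | g r ≤ g j} = j := by
  rw [filter_Icc_apply_le_apply hg hj, Nat.card_Icc, Nat.add_sub_cancel]

lemma card_filter_image_Icc_le_apply (hg : StrictMonoOn g (Set.Icc 1 m))
    (hj : j ∈ Set.Icc 1 m) : #{p ∈ (Finset.Icc 1 m).image g | p ≤ g j} = j := by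
  rw [Finset.filter_image, Finset.card_image_of_injOn, card_filter_Icc_apply_le_apply hg hj]
  exact hg.injOn.mono fun r hr => Finset.mem_Icc.1 (Finset.mem_filter.1 hr).1

end Rank

section wPerm

variable {n k : ℕ} {ℓ : ℕ → ℕ}

lemma goodL_iff :
    goodL n k ℓ ↔
      Set.MapsTo ℓ (Set.Icc 1 k) (Set.Icc 1 n) ∧ StrictMonoOn ℓ (Set.Icc 1 k) := by
  simp only [goodL, Finset.mem_Icc]
  constructor
  · rintro ⟨hmaps, hmono⟩
    exact ⟨fun j hj => hmaps j hj, fun j hj j' hj' hjj' => hmono j j' hj.1 hjj' hj'.2⟩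
  · rintro ⟨hmaps, hmono⟩
    exact ⟨fun j hj => hmaps hj,
      fun j j' h1 hjj' h2 => hmono ⟨h1, by omega⟩ ⟨by omega, h2⟩ hjj'⟩

lemma wPerm_apply_apply (hℓ : StrictMonoOn ℓ (Set.Icc 1 k)) {j : ℕ} (hj : j ∈ Set.Icc 1 k) :
    wPerm n k ℓ (ℓ j) = n - k + j := by
  rw [wPerm, if_pos ⟨j, Finset.mem_Icc.2 hj, rfl⟩, card_filter_Icc_apply_le_apply hℓ hj]

lemma wPerm_apply_of_notMem (hℓ : Set.InjOn ℓ (Set.Icc 1 k))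
    (hpos : ∀ j ∈ Set.Icc 1 k, 1 ≤ ℓ j) {i : ℕ} (hi : i ∉ (Finset.Icc 1 k).image ℓ) :
    wPerm n k ℓ i = #{p ∈ Finset.Icc 1 i | p ∉ (Finset.Icc 1 k).image ℓ} := by
  set L := (Finset.Icc 1 k).image ℓ
  have hcount : #{j ∈ Finset.Icc 1 k | ℓ j < i} = #{p ∈ Finset.Icc 1 i | p ∈ L} := by
    have hℓ' : Set.InjOn ℓ ↑{j ∈ Finset.Icc 1 k | ℓ j < i} :=
      hℓ.mono fun r hr => Finset.mem_Icc.1 (Finset.mem_filter.1 hr).1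
    rw [← Finset.card_image_of_injOn hℓ', ← Finset.filter_image (p := (· < i))]
    congr 1
    ext p
    simp only [Finset.mem_filter, Finset.mem_Icc, L, Finset.mem_image] at hi ⊢
    constructor
    · rintro ⟨⟨j, hj, rfl⟩, hlt⟩
      exact ⟨⟨hpos j hj, hlt.le⟩, j, hj, rfl⟩
    · rintro ⟨⟨-, hle⟩, j, hj, rfl⟩
      exact ⟨⟨j, hj, rfl⟩, lt_of_le_of_ne hle fun h => hi ⟨j, hj, h⟩⟩
  have hsplit := Finset.card_filter_add_card_filter_not (s := Finset.Icc 1 i) (· ∈ L)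
  rw [Nat.card_Icc, Nat.add_sub_cancel] at hsplit
  rw [wPerm, if_neg (by simpa [L] using hi), hcount]
  omega

lemma strictMonoOn_wPerm (hℓ : Set.InjOn ℓ (Set.Icc 1 k))
    (hpos : ∀ j ∈ Set.Icc 1 k, 1 ≤ ℓ j) :
    StrictMonoOn (wPerm n k ℓ) (↑((Finset.Icc 1 k).image ℓ))ᶜ := by
  intro i hi i' hi' hii'
  rw [wPerm_apply_of_notMem hℓ hpos hi, wPerm_apply_of_notMem hℓ hpos hi']
  refine Finset.card_lt_card ((Finset.ssubset_iff_of_subset ?_).2 ⟨i', ?_, ?_⟩)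
  · exact Finset.filter_subset_filter _ (Finset.Icc_subset_Icc_right hii'.le)
  · exact Finset.mem_filter.2 ⟨Finset.mem_Icc.2 ⟨hii'.pos, le_rfl⟩, hi'⟩
  · simp [hii']

end wPerm

section SpringerCondition

variable {n m : ℕ} {w u : ℕ → ℕ}

lemma springer_condition_iff_strictMonoOn (hw : Set.BijOn w (Set.Icc 1 n) (Set.Icc 1 n))
    (hinv : Set.InvOn u w (Set.Icc 1 n) (Set.Icc 1 n)) (hm : m ≤ n) :
    (∀ i ∈ Set.Icc 1 n,
        w i = 1 ∨ w i = m + 1 ∨ ∃ j, 1 ≤ j ∧ j < i ∧ w j = w i - 1) ↔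
      StrictMonoOn u (Set.Icc 1 m) ∧ StrictMonoOn u (Set.Icc (m + 1) n) := by
  have hu := hw.symm hinv.symm
  constructor
  · intro hS
    have hstep : ∀ v, 1 ≤ v → v + 1 ≤ n → v ≠ m → u v < u (v + 1) := by
      intro v hv1 hvn hvm
      have hi : u (v + 1) ∈ Set.Icc 1 n := hu.mapsTo ⟨by omega, hvn⟩
      have hwi : w (u (v + 1)) = v + 1 := hinv.2 ⟨by omega, hvn⟩
      obtain h1 | hm1 | ⟨j, hj1, hji, hwj⟩ := hS _ hi
      · omega
      · omega
      · rw [hwi, Nat.add_sub_cancel] at hwj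
        have hj : j ∈ Set.Icc 1 n := ⟨hj1, (hji.trans_le hi.2).le⟩
        have huv : u v = j := by rw [← hwj, hinv.1 hj]
        exact huv ▸ hji
    refine ⟨strictMonoOn_of_lt_add_one Set.ordConnected_Icc ?_,
      strictMonoOn_of_lt_add_one Set.ordConnected_Icc ?_⟩
    · rintro v - ⟨hv1, -⟩ ⟨-, hvm⟩
      exact hstep v hv1 (hvm.trans hm) (by omega)
    · rintro v - ⟨hmv, -⟩ ⟨-, hvn⟩
      exact hstep v (by omega) hvn (by omega)
  · rintro ⟨hlow, hhigh⟩ i hi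
    obtain ⟨hv1, hvn⟩ : w i ∈ Set.Icc 1 n := hw.mapsTo hi
    by_cases h1 : w i = 1
    · exact Or.inl h1
    by_cases hm1 : w i = m + 1
    · exact Or.inr (Or.inl hm1)
    have hprev : w i - 1 ∈ Set.Icc 1 n := ⟨by omega, by omega⟩
    refine Or.inr (Or.inr ⟨u (w i - 1), (hu.mapsTo hprev).1, ?_, hinv.2 hprev⟩)
    conv_rhs => rw [← hinv.1 hi]
    rcases le_or_gt (w i) m with hwm | hwm
    · exact hlow ⟨by omega, by omega⟩ ⟨hv1, hwm⟩ (by omega)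
    · exact hhigh ⟨by omega, by omega⟩ ⟨hwm, hvn⟩ (by omega)

end SpringerCondition

section Characterization

variable {n k : ℕ} {w u : ℕ → ℕ}

lemma mem_image_shift_iff (hw : Set.BijOn w (Set.Icc 1 n) (Set.Icc 1 n))
    (hinv : Set.InvOn u w (Set.Icc 1 n) (Set.Icc 1 n)) (hk : k ≤ n) {p : ℕ}
    (hp : p ∈ Set.Icc 1 n) :
    p ∈ (Finset.Icc 1 k).image (fun j => u (n - k + j)) ↔ n - k < w p := by
  simp only [Finset.mem_image, Finset.mem_Icc]
  constructor
  · rintro ⟨j, ⟨hj1, hjk⟩, rfl⟩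
    rw [hinv.2 ⟨by omega, by omega⟩]
    omega
  · intro hwp
    have hwpn := (hw.mapsTo hp).2
    refine ⟨w p - (n - k), ⟨by omega, by omega⟩, ?_⟩
    rw [Nat.add_sub_cancel' hwp.le, hinv.1 hp]

lemma filter_Icc_notMem_image_shift (hw : Set.BijOn w (Set.Icc 1 n) (Set.Icc 1 n))
    (hinv : Set.InvOn u w (Set.Icc 1 n) (Set.Icc 1 n)) (hk : k ≤ n) {i : ℕ} (hi : i ≤ n) :
    {p ∈ Finset.Icc 1 i | p ∉ (Finset.Icc 1 k).image (fun j => u (n - k + j))} =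
      {p ∈ (Finset.Icc 1 (n - k)).image u | p ≤ i} := by
  have hu := hw.symm hinv.symm
  ext p
  simp only [Finset.mem_filter, Finset.mem_Icc]
  constructor
  · rintro ⟨⟨hp1, hpi⟩, hpL⟩
    have hp : p ∈ Set.Icc 1 n := ⟨hp1, hpi.trans hi⟩
    have hwp := (mem_image_shift_iff hw hinv hk hp).not.1 hpL
    exact ⟨Finset.mem_image.2 ⟨w p, Finset.mem_Icc.2 ⟨(hw.mapsTo hp).1, not_lt.1 hwp⟩,
      hinv.1 hp⟩, hpi⟩
  · rintro ⟨hpu, hpi⟩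
    obtain ⟨v, hv, rfl⟩ := Finset.mem_image.1 hpu
    obtain ⟨hv1, hvk⟩ := Finset.mem_Icc.1 hv
    have hvn : v ∈ Set.Icc 1 n := ⟨hv1, hvk.trans (by omega)⟩
    refine ⟨⟨(hu.mapsTo hvn).1, hpi⟩, fun hvL => ?_⟩
    have hlt := (mem_image_shift_iff hw hinv hk (hu.mapsTo hvn)).1 hvL
    rw [hinv.2 hvn] at hlt
    exact absurd hvk (not_le.2 hlt)

lemma exists_goodL_eq_wPerm (hw : Set.BijOn w (Set.Icc 1 n) (Set.Icc 1 n))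
    (hinv : Set.InvOn u w (Set.Icc 1 n) (Set.Icc 1 n)) (hk : k ≤ n)
    (hlow : StrictMonoOn u (Set.Icc 1 (n - k))) (hhigh : StrictMonoOn u (Set.Icc (n - k + 1) n)) :
    ∃ ℓ : ℕ → ℕ, goodL n k ℓ ∧ ∀ i ∈ Set.Icc 1 n, w i = wPerm n k ℓ i := by
  have hshift : ∀ j ∈ Set.Icc 1 k, n - k + j ∈ Set.Icc (n - k + 1) n := by
    rintro j ⟨hj1, hjk⟩
    exact ⟨by omega, by omega⟩
  have hshift' : ∀ j ∈ Set.Icc 1 k, n - k + j ∈ Set.Icc 1 n := fun j hj =>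
    Set.Icc_subset_Icc_left (by omega) (hshift j hj)
  set ℓ : ℕ → ℕ := fun j => u (n - k + j)
  have hℓmono : StrictMonoOn ℓ (Set.Icc 1 k) := fun j hj j' hj' hjj' =>
    hhigh (hshift j hj) (hshift j' hj') (by omega)
  have hℓmaps : Set.MapsTo ℓ (Set.Icc 1 k) (Set.Icc 1 n) := fun j hj =>
    (hw.symm hinv.symm).mapsTo (hshift' j hj)
  refine ⟨ℓ, goodL_iff.2 ⟨hℓmaps, hℓmono⟩, fun i hi => ?_⟩
  by_cases hiL : i ∈ (Finset.Icc 1 k).image ℓ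
  · obtain ⟨j, hj, rfl⟩ := Finset.mem_image.1 hiL
    rw [wPerm_apply_apply hℓmono (Finset.mem_Icc.1 hj)]
    exact hinv.2 (hshift' j (Finset.mem_Icc.1 hj))
  have hwi : w i ∈ Set.Icc 1 (n - k) :=
    ⟨(hw.mapsTo hi).1, not_lt.1 ((mem_image_shift_iff hw hinv hk hi).not.1 hiL)⟩
  have hrank := card_filter_image_Icc_le_apply hlow hwi
  rw [hinv.1 hi] at hrank
  rw [wPerm_apply_of_notMem hℓmono.injOn (fun j hj => (hℓmaps hj).1) hiL,
    filter_Icc_notMem_image_shift hw hinv hk hi.2, hrank]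

lemma strictMonoOn_of_eq_wPerm {ℓ : ℕ → ℕ} (hw : Set.BijOn w (Set.Icc 1 n) (Set.Icc 1 n))
    (hinv : Set.InvOn u w (Set.Icc 1 n) (Set.Icc 1 n)) (hℓ : goodL n k ℓ)
    (hwℓ : ∀ i ∈ Set.Icc 1 n, w i = wPerm n k ℓ i) :
    StrictMonoOn u (Set.Icc 1 (n - k)) ∧ StrictMonoOn u (Set.Icc (n - k + 1) n) := by
  have hu := hw.symm hinv.symm
  obtain ⟨hℓmaps, hℓmono⟩ := goodL_iff.1 hℓ
  have hwℓ' : ∀ j ∈ Set.Icc 1 k, w (ℓ j) = n - k + j := fun j hj =>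
    (hwℓ _ (hℓmaps hj)).trans (wPerm_apply_apply hℓmono hj)
  have huℓ : ∀ j ∈ Set.Icc 1 k, u (n - k + j) = ℓ j := fun j hj => by
    rw [← hwℓ' j hj, hinv.1 (hℓmaps hj)]
  constructor
  · have hout :
        ∀ v ∈ Set.Icc 1 (n - k), u v ∈ (↑((Finset.Icc 1 k).image ℓ) : Set ℕ)ᶜ := by
      rintro v ⟨hv1, hvk⟩ huv
      obtain ⟨j, hj, hℓj⟩ := Finset.mem_image.1 huv
      have hwuv := hwℓ' j (Finset.mem_Icc.1 hj)
      rw [hℓj, hinv.2 ⟨hv1, hvk.trans (Nat.sub_le n k)⟩] at hwuv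
      have := (Finset.mem_Icc.1 hj).1
      omega
    have hvals : ∀ v ∈ Set.Icc 1 (n - k), wPerm n k ℓ (u v) = v := fun v hv => by
      have hvn : v ∈ Set.Icc 1 n := ⟨hv.1, hv.2.trans (Nat.sub_le n k)⟩
      rw [← hwℓ _ (hu.mapsTo hvn), hinv.2 hvn]
    intro v hv v' hv' hvv'
    refine ((strictMonoOn_wPerm (n := n) hℓmono.injOn fun j hj => (hℓmaps hj).1).lt_iff_lt
      (hout v hv) (hout v' hv')).1 ?_
    rwa [hvals v hv, hvals v' hv']
  · have hshift : ∀ v ∈ Set.Icc (n - k + 1) n, ∃ j ∈ Set.Icc 1 k, n - k + j = v := by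
      rintro v ⟨hv1, hvn⟩
      exact ⟨v - (n - k), ⟨by omega, by omega⟩, by omega⟩
    intro v hv v' hv' hvv'
    obtain ⟨j, hj, rfl⟩ := hshift v hv
    obtain ⟨j', hj', rfl⟩ := hshift v' hv'
    rw [huℓ j hj, huℓ j' hj']
    exact hℓmono hj hj' (by omega)

end Characterization

theorem wPerm_iff_springer_condition (n k : ℕ) (h : 2 * k ≤ n) (w : ℕ → ℕ)
    (hw : Set.BijOn w (Set.Icc 1 n) (Set.Icc 1 n)) :
    (∀ i ∈ Set.Icc 1 n,
        w i = 1 ∨ w i = n - k + 1 ∨ ∃ j, 1 ≤ j ∧ j < i ∧ w j = w i - 1) ↔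
      (∃ ℓ : ℕ → ℕ, goodL n k ℓ ∧ ∀ i ∈ Set.Icc 1 n, w i = wPerm n k ℓ i) := by
  have hinv := hw.invOn_invFunOn
  rw [springer_condition_iff_strictMonoOn hw hinv (Nat.sub_le n k)]
  exact ⟨fun ⟨hlow, hhigh⟩ => exists_goodL_eq_wPerm hw hinv (by omega) hlow hhigh,
    fun ⟨_, hℓ, hwℓ⟩ => strictMonoOn_of_eq_wPerm hw hinv hℓ hwℓ⟩
end

section
/- Let n, k be integers with 0 ≤ k ≤ n/2 and let I be the ideal of ℚ[x_1,...,x_n,t] described below. Then the quotient ℚ[x_1,...,x_n,t]/I, regarded as a module over the polynomial ring ℚ[t], is generated by at most C(n,k) elements; in particular its rank over ℚ[t] is at most the binomial coefficient C(n,k). -/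
open scoped BigOperators

/-- The variable `t` in `ℚ[x₁,…,xₙ,t] = MvPolynomial (Fin (n+1)) ℚ`
(variable `0` is `t`, variable `i` is `xᵢ` for `1 ≤ i ≤ n`). -/
noncomputable def tP (n : ℕ) : MvPolynomial (Fin (n + 1)) ℚ :=
  MvPolynomial.X 0

/-- The variable `xᵢ` (for `1 ≤ i ≤ n`) of `ℚ[x₁,…,xₙ,t]`, with the
convention `x₀ = 0` (and `xᵢ = 0` out of range). -/
noncomputable def xP (n : ℕ) (i : ℕ) : MvPolynomial (Fin (n + 1)) ℚ :=
  if h : 1 ≤ i ∧ i ≤ n then MvPolynomial.X ⟨i, by omega⟩ else 0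

/-- The ideal `I` of `ℚ[x₁,…,xₙ,t]` generated by
(i) `∑ᵢ xᵢ - (n(n+1)/2)·t`;
(ii) `(xᵢ + xᵢ₋₁ - (n-k+i)·t)·(xᵢ - xᵢ₋₁ - t)` for `1 ≤ i ≤ n`;
(iii) `∏_{j=0}^{k} (x_{i_j} - (i_j - j)·t)` for all `1 ≤ i₀ < ⋯ < iₖ ≤ n`. -/
noncomputable def Iid (n k : ℕ) : Ideal (MvPolynomial (Fin (n + 1)) ℚ) :=
  Ideal.span
    ({(∑ i ∈ Finset.Icc 1 n, xP n i) -
        MvPolynomial.C (((n : ℚ) * ((n : ℚ) + 1)) / 2) * tP n} ∪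
      {p | ∃ i, 1 ≤ i ∧ i ≤ n ∧
        p = (xP n i + xP n (i - 1) - MvPolynomial.C ((n : ℚ) - (k : ℚ) + (i : ℚ)) * tP n) *
              (xP n i - xP n (i - 1) - tP n)} ∪
      {p | ∃ m : Fin (k + 1) → ℕ, StrictMono m ∧ 1 ≤ m 0 ∧ m (Fin.last k) ≤ n ∧
        p = ∏ j : Fin (k + 1),
              (xP n (m j) - MvPolynomial.C ((m j : ℚ) - ((j : ℕ) : ℚ)) * tP n)})

/-!
Modulo `t`, the generators (ii) give `xᵢ² ≡ xᵢ₋₁² ≡ ⋯ ≡ x₀² = 0`, the generators (iii) kill every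
squarefree monomial of degree `k + 1`, and `(∑ᵢ xᵢ) · x_S` gives `∑_{i ∉ S} x_{S ∪ {i}} ≡ 0`.
So `ℚ[x, t] / (I + (t))` is spanned by the `x_S` with `|S| ≤ k`, subject to one such relation for
each `|S| < k`. These relations are independent: the up operator of the Boolean lattice is
injective below the middle rank, by the identity `DU - UD = n - 2|S|` and positivity. Hence
`dim ℚ[x, t] / (I + (t)) ≤ #{|S| ≤ k} - #{|S| < k} = C(n, k)`, and since `I` is homogeneous and
`t` has degree one, graded Nakayama lifts a monomial basis to generators over `ℚ[t]`.
-/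

open Finset

namespace Finset

variable {α : Type*} [Fintype α] [DecidableEq α]

theorem sum_sum_erase_eq_sum_sum_compl {M : Type*} [AddCommMonoid M]
    (g : Finset α → α → M) :
    ∑ T, ∑ i ∈ T, g (T.erase i) i = ∑ S, ∑ i ∈ Sᶜ, g S i := by
  rw [sum_sigma', sum_sigma']
  refine sum_bij' (fun a _ => ⟨a.1.erase a.2, a.2⟩) (fun a _ => ⟨insert a.2 a.1, a.2⟩)
    ?_ ?_ ?_ ?_ fun _ _ => rfl <;> rintro ⟨T, i⟩ h <;> simp_all [insert_erase]

theorem sum_erase_mul_erase_eq_sum_insert_mul_insert {R : Type*} [CommSemiring R]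
    (b : Finset α → R) :
    ∑ T, ∑ i ∈ T, ∑ j ∈ T.erase i, b (T.erase i) * b (T.erase j) =
      ∑ S, ∑ i ∈ Sᶜ, ∑ j ∈ (insert i S)ᶜ, b (insert i S) * b (insert j S) := by
  have hT : ∀ T : Finset α, ∀ i ∈ T, ∑ j ∈ T.erase i, b (T.erase i) * b (T.erase j) =
      ∑ j ∈ T.erase i, b (T.erase i) * b (insert i ((T.erase i).erase j)) := by
    intro T i hi
    refine sum_congr rfl fun j hj => ?_
    rw [erase_right_comm, insert_erase (mem_erase.2 ⟨(ne_of_mem_erase hj).symm, hi⟩)]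
  have hS : ∀ S : Finset α, ∑ i ∈ Sᶜ, ∑ j ∈ S, b S * b (insert i (S.erase j)) =
      ∑ j ∈ S, ∑ i ∈ (insert j (S.erase j))ᶜ,
        b (insert j (S.erase j)) * b (insert i (S.erase j)) := by
    intro S
    rw [sum_comm]
    refine sum_congr rfl fun j hj => ?_
    rw [insert_erase hj]
  rw [sum_congr rfl fun T _ => sum_congr rfl (hT T),
    sum_sum_erase_eq_sum_sum_compl fun S i => ∑ j ∈ S, b S * b (insert i (S.erase j)),
    sum_congr rfl fun S _ => hS S,
    sum_sum_erase_eq_sum_sum_compl fun S j => ∑ i ∈ (insert j S)ᶜ, b (insert j S) * b (insert i S)]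

/-- The commutation relation `D U - U D = (n - 2 |S|)` between the up and down operators of the
Boolean lattice, paired with `b`. -/
theorem sum_sq_sum_erase_add_eq_sum_sq_sum_insert_add {R : Type*} [CommRing R]
    (b : Finset α → R) :
    ∑ T, (∑ i ∈ T, b (T.erase i)) ^ 2 + ∑ T, (#T : R) * b T ^ 2 =
      ∑ S, (∑ i ∈ Sᶜ, b (insert i S)) ^ 2 + ∑ S, (#Sᶜ : R) * b S ^ 2 := by
  have hT : ∀ T : Finset α, (∑ i ∈ T, b (T.erase i)) ^ 2 =
      ∑ i ∈ T, (b (T.erase i) ^ 2 + ∑ j ∈ T.erase i, b (T.erase i) * b (T.erase j)) := by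
    intro T
    rw [sq, sum_mul_sum]
    exact sum_congr rfl fun i hi => by rw [← add_sum_erase _ _ hi, sq]
  have hS : ∀ S : Finset α, (∑ i ∈ Sᶜ, b (insert i S)) ^ 2 =
      ∑ i ∈ Sᶜ, (b (insert i S) ^ 2 + ∑ j ∈ (insert i S)ᶜ, b (insert i S) * b (insert j S)) := by
    intro S
    rw [sq, sum_mul_sum]
    exact sum_congr rfl fun i hi => by rw [← add_sum_erase _ _ hi, sq, compl_insert]
  have hdiagT : ∑ T : Finset α, ∑ i ∈ T, b (T.erase i) ^ 2 = ∑ S, (#Sᶜ : R) * b S ^ 2 := by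
    rw [sum_sum_erase_eq_sum_sum_compl fun S _ => b S ^ 2]
    simp
  have hdiagS : ∑ S : Finset α, ∑ i ∈ Sᶜ, b (insert i S) ^ 2 = ∑ T, (#T : R) * b T ^ 2 := by
    rw [← sum_sum_erase_eq_sum_sum_compl fun S i => b (insert i S) ^ 2]
    refine sum_congr rfl fun T _ => ?_
    rw [sum_congr rfl fun i hi => by rw [insert_erase hi]]
    simp
  simp only [hT, hS, sum_add_distrib, hdiagT, hdiagS, sum_erase_mul_erase_eq_sum_insert_mul_insert]
  ring

theorem eq_zero_of_sum_erase_eq_zero {K : Type*} [Field K] [LinearOrder K] [IsStrictOrderedRing K]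
    {b : Finset α → K} (hU : ∀ T, ∑ i ∈ T, b (T.erase i) = 0)
    (hb : ∀ S, b S ≠ 0 → 2 * #S < Fintype.card α) (S : Finset α) : b S = 0 := by
  have hgap : ∀ S, (#S : K) * b S ^ 2 + b S ^ 2 ≤ (#Sᶜ : K) * b S ^ 2 := by
    intro S
    by_cases hS : b S = 0
    · simp [hS]
    have hcard : #S + 1 ≤ #Sᶜ := by
      have := card_add_card_compl S
      have := hb S hS
      omega
    have : ((#S : K) + 1) * b S ^ 2 ≤ (#Sᶜ : K) * b S ^ 2 :=
      mul_le_mul_of_nonneg_right (by exact_mod_cast hcard) (sq_nonneg _)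
    linarith
  have hsq : ∑ S, b S ^ 2 ≤ 0 := by
    have key := sum_sq_sum_erase_add_eq_sum_sq_sum_insert_add b
    have hgap' := sum_le_sum fun S (_ : S ∈ univ) => hgap S
    have hdown : 0 ≤ ∑ S : Finset α, (∑ i ∈ Sᶜ, b (insert i S)) ^ 2 :=
      sum_nonneg fun _ _ => sq_nonneg _
    simp only [hU, sum_add_distrib] at key hgap'
    simp at key
    linarith
  exact pow_eq_zero_iff two_ne_zero |>.1 <|
    (sum_eq_zero_iff_of_nonneg fun _ _ => sq_nonneg _).1
      (le_antisymm hsq (sum_nonneg fun _ _ => sq_nonneg _)) S (mem_univ S)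

theorem card_subtype_card_le_eq_add_choose (k : ℕ) :
    Fintype.card {S : Finset α // #S ≤ k} =
      Fintype.card {S : Finset α // #S < k} + (Fintype.card α).choose k := by
  simp only [Fintype.card_subtype]
  rw [← card_univ, ← card_powersetCard, ← card_union_of_disjoint]
  · congr 1
    ext S
    simp only [mem_union, mem_filter, mem_univ, mem_powersetCard, subset_univ, true_and,
      Nat.le_iff_lt_or_eq]
  · exact disjoint_left.2 fun S hS hS' => by simp_all

end Finset

theorem Function.of_extend_subtypeVal_ne_zero {β γ : Type*} [Zero γ] {p : β → Prop}
    {g : Subtype p → γ} {b : β} (h : Function.extend Subtype.val g 0 b ≠ 0) : p b := by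
  by_contra hb
  exact h (Function.extend_apply' _ _ _ fun ⟨a, ha⟩ => hb (ha ▸ a.2))

theorem sum_erase_extend_eq_zero {K α : Type*} [AddCommMonoid K] [DecidableEq α] {k : ℕ}
    (g : {S : Finset α // #S < k} → K) {T : Finset α} (hT : k < #T) :
    ∑ i ∈ T, Function.extend Subtype.val g 0 (T.erase i) = 0 := by
  refine sum_eq_zero fun i hi => not_not.1 fun h => ?_
  have := Function.of_extend_subtypeVal_ne_zero h
  rw [card_erase_of_mem hi] at this
  omega

section UpMap

variable (K : Type*) {α : Type*} [Field K] [Fintype α] [DecidableEq α]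

/-- The up operator of the Boolean lattice. -/
noncomputable def upMap (k : ℕ) :
    ({S : Finset α // #S < k} → K) →ₗ[K] {S : Finset α // #S ≤ k} → K where
  toFun g T := ∑ i ∈ T.1, Function.ExtendByZero.linearMap K Subtype.val g (T.1.erase i)
  map_add' g h := by ext; simp only [map_add, Pi.add_apply, sum_add_distrib]
  map_smul' c g := by ext; simp only [map_smul, Pi.smul_apply, smul_sum, RingHom.id_apply]

variable {K}

theorem upMap_injective [LinearOrder K] [IsStrictOrderedRing K] {k : ℕ}
    (hk : 2 * k ≤ Fintype.card α) : Function.Injective (upMap K (α := α) k) := by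
  rw [← LinearMap.ker_eq_bot, LinearMap.ker_eq_bot']
  intro g hg
  have hU : ∀ T, ∑ i ∈ T, Function.extend Subtype.val g 0 (T.erase i) = 0 := by
    intro T
    by_cases hT : #T ≤ k
    · simpa [upMap] using congrFun hg ⟨T, hT⟩
    · exact sum_erase_extend_eq_zero (T := T) g (by omega)
  funext S
  have := eq_zero_of_sum_erase_eq_zero hU
    (fun S hS => by have := Function.of_extend_subtypeVal_ne_zero hS; omega) S.1
  rwa [Subtype.val_injective.extend_apply] at this

theorem linearCombination_comp_upMap {V : Type*} [AddCommGroup V] [Module K V] {k : ℕ}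
    {v : Finset α → V} (hrel : ∀ S, #S < k → ∑ i ∈ Sᶜ, v (insert i S) = 0) :
    Fintype.linearCombination K (fun S : {S : Finset α // #S ≤ k} => v S) ∘ₗ upMap K k = 0 := by
  refine LinearMap.ext fun g => ?_
  set ĝ := Function.extend Subtype.val g 0
  calc Fintype.linearCombination K (fun S : {S : Finset α // #S ≤ k} => v S) (upMap K k g)
      = ∑ T, (∑ i ∈ T, ĝ (T.erase i)) • v T := by
        simp only [Fintype.linearCombination_apply, upMap, LinearMap.coe_mk, AddHom.coe_mk,
          Function.ExtendByZero.linearMap_apply]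
        rw [← sum_subtype (univ.filter (#· ≤ k)) (by simp) fun T => (∑ i ∈ T, ĝ (T.erase i)) • v T]
        refine sum_filter_of_ne fun T _ hT => not_lt.1 fun hkT => hT ?_
        rw [sum_erase_extend_eq_zero g hkT, zero_smul]
    _ = ∑ T, ∑ i ∈ T, ĝ (T.erase i) • v (insert i (T.erase i)) := by
        simp_rw [sum_smul]
        exact sum_congr rfl fun T _ => sum_congr rfl fun i hi => by rw [insert_erase hi]
    _ = ∑ S, ĝ S • ∑ i ∈ Sᶜ, v (insert i S) := by
        rw [sum_sum_erase_eq_sum_sum_compl fun S i => ĝ S • v (insert i S)]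
        simp_rw [smul_sum]
    _ = 0 := by
        refine sum_eq_zero fun S _ => ?_
        by_cases hS : ĝ S = 0
        · rw [hS, zero_smul]
        · rw [hrel S (Function.of_extend_subtypeVal_ne_zero (g := g) hS), smul_zero]

end UpMap

theorem finrank_le_choose_of_sum_insert_eq_zero {K V α : Type*} [Field K] [LinearOrder K]
    [IsStrictOrderedRing K] [AddCommGroup V] [Module K V] [Fintype α] [DecidableEq α] {k : ℕ}
    (hk : 2 * k ≤ Fintype.card α) (v : Finset α → V)
    (hspan : Submodule.span K (Set.range fun S : {S : Finset α // #S ≤ k} => v S) = ⊤)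
    (hrel : ∀ S, #S < k → ∑ i ∈ Sᶜ, v (insert i S) = 0) :
    Module.finrank K V ≤ (Fintype.card α).choose k := by
  set φ := Fintype.linearCombination K fun S : {S : Finset α // #S ≤ k} => v S
  have hker : Fintype.card {S : Finset α // #S < k} ≤ Module.finrank K (LinearMap.ker φ) :=
    calc Fintype.card {S : Finset α // #S < k}
        = Module.finrank K (LinearMap.range (upMap K (α := α) k)) := by
          rw [LinearMap.finrank_range_of_inj (upMap_injective hk), Module.finrank_pi]
      _ ≤ _ :=
        Submodule.finrank_mono (LinearMap.range_le_ker_iff.2 (linearCombination_comp_upMap hrel))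
  have hrank := LinearMap.finrank_range_add_finrank_ker φ
  rw [Fintype.range_linearCombination, hspan, finrank_top, Module.finrank_pi,
    card_subtype_card_le_eq_add_choose k] at hrank
  omega

section GradedNakayama

variable {K A ι : Type*} [CommRing K] [CommRing A] [Algebra K A] [Fintype ι]
  (𝒜 : ℕ → Submodule K A) [GradedAlgebra 𝒜] {I : Ideal A} {t : A} {e : ℕ} {s : ι → A}
  {deg : ι → ℕ}

theorem exists_homogeneous_eq_sum_smul_add_add_mul (hI : I.IsHomogeneous 𝒜) (ht : t ∈ 𝒜 e)
    (hs : ∀ i, s i ∈ 𝒜 (deg i)) {d : ℕ} {p : A} (hp : p ∈ 𝒜 d) {c : ι → K}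
    (hc : p - ∑ i, c i • s i ∈ I ⊔ Ideal.span {t}) :
    ∃ c' : ι → K, ∃ a ∈ I, ∃ r ∈ 𝒜 (d - e), (d < e → r = 0) ∧
      p = ∑ i, c' i • s i + a + r * t := by
  obtain ⟨a, ha, b, hb, hab⟩ := Submodule.mem_sup.1 hc
  obtain ⟨r, rfl⟩ := Ideal.mem_span_singleton'.1 hb
  let π := GradedAlgebra.proj 𝒜 d
  let r' := if e ≤ d then GradedAlgebra.proj 𝒜 (d - e) r else 0
  have hπr : π (r * t) = r' * t := by
    simp only [π, r', GradedAlgebra.proj_apply, DirectSum.coe_decompose_mul_of_right_mem 𝒜 d ht]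
    split_ifs <;> simp
  have hπs : ∀ i, π (s i) = if deg i = d then s i else 0 := by
    intro i
    simp only [π, GradedAlgebra.proj_apply]
    split_ifs with h
    · exact DirectSum.decompose_of_mem_same 𝒜 (h ▸ hs i)
    · exact DirectSum.decompose_of_mem_ne 𝒜 (hs i) h
  refine ⟨fun i => if deg i = d then c i else 0, π a, hI d ha, r', ?_, fun h => if_neg (by omega),
    ?_⟩
  · by_cases hed : e ≤ d
    · simp only [r', if_pos hed, GradedAlgebra.proj_apply, SetLike.coe_mem]
    · simp only [r', if_neg hed, Submodule.zero_mem]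
  · calc p = π p := (DirectSum.decompose_of_mem_same 𝒜 hp).symm
      _ = π (∑ i, c i • s i + (a + r * t)) := by rw [hab, add_sub_cancel]
      _ = _ := by
        simp only [map_add, map_sum, map_smul, hπs, hπr, smul_ite, ite_smul, smul_zero,
          zero_smul, add_assoc]

open Polynomial in
/-- Graded Nakayama lemma. -/
theorem exists_sum_aeval_mul_sub_mem_of_isHomogeneous (hI : I.IsHomogeneous 𝒜) (he : 0 < e)
    (ht : t ∈ 𝒜 e) (hs : ∀ i, s i ∈ 𝒜 (deg i))
    (hgen : ∀ p, ∃ c : ι → K, p - ∑ i, c i • s i ∈ I ⊔ Ideal.span {t}) (p : A) :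
    ∃ c : ι → K[X], p - ∑ i, aeval t (c i) * s i ∈ I := by
  let P : A → Prop := fun p => ∃ c : ι → K[X], p - ∑ i, aeval t (c i) * s i ∈ I
  have hP_add : ∀ p q, P p → P q → P (p + q) := by
    rintro p q ⟨c, hc⟩ ⟨c', hc'⟩
    refine ⟨c + c', ?_⟩
    convert I.add_mem hc hc' using 1
    simp only [Pi.add_apply, map_add, add_mul, Finset.sum_add_distrib]
    ring
  have hP_mem : ∀ a ∈ I, P a := fun a ha => ⟨0, by simpa using ha⟩
  have hP_mul : ∀ q, P q → P (q * t) := by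
    rintro q ⟨c, hc⟩
    refine ⟨fun i => X * c i, ?_⟩
    convert I.mul_mem_right t hc using 1
    simp only [map_mul, aeval_X, sub_mul, Finset.sum_mul]
    congr 1
    exact Finset.sum_congr rfl fun i _ => by ring
  have hP_span : ∀ c : ι → K, P (∑ i, c i • s i) :=
    fun c => ⟨fun i => C (c i), by simp [Algebra.smul_def]⟩
  have hP_hom : ∀ d, ∀ p ∈ 𝒜 d, P p := by
    intro d
    induction d using Nat.strong_induction_on with
    | _ d ih =>
    intro p hp
    obtain ⟨c, hc⟩ := hgen p
    obtain ⟨c', a, ha, r, hr, hr0, rfl⟩ :=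
      exists_homogeneous_eq_sum_smul_add_add_mul 𝒜 hI ht hs hp hc
    have hPr : P r := by
      by_cases hed : e ≤ d
      · exact ih (d - e) (by omega) r hr
      · exact hr0 (by omega) ▸ hP_mem 0 I.zero_mem
    exact hP_add _ _ (hP_add _ _ (hP_span c') (hP_mem a ha)) (hP_mul r hPr)
  exact DirectSum.Decomposition.inductionOn 𝒜 (hP_mem 0 I.zero_mem)
    (fun {d} m => hP_hom d m m.2) hP_add p

end GradedNakayama

open MvPolynomial

-- `x_S = ∏_{i ∈ S} x_{i+1}`: the variables `x₁, …, xₙ` are indexed by `Fin n`.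
noncomputable def xMonomial (n : ℕ) (S : Finset (Fin n)) : MvPolynomial (Fin (n + 1)) ℚ :=
  ∏ i ∈ S, X i.succ

noncomputable def Jid (n k : ℕ) : Ideal (MvPolynomial (Fin (n + 1)) ℚ) :=
  Iid n k ⊔ Ideal.span {tP n}

section Ideals

variable {n k : ℕ}

theorem xP_zero : xP n 0 = 0 := dif_neg (by omega)

theorem xP_succ (i : Fin n) : xP n (i + 1) = X i.succ :=
  dif_pos ⟨by omega, i.2⟩

theorem Iid_le_Jid : Iid n k ≤ Jid n k := le_sup_left

theorem tP_mem_Jid : tP n ∈ Jid n k := Ideal.mem_sup_right (Ideal.mem_span_singleton_self _)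

theorem sum_X_succ_mem_Jid : ∑ i : Fin n, X (R := ℚ) i.succ ∈ Jid n k := by
  have hgen : (∑ i ∈ Icc 1 n, xP n i) - C ((n : ℚ) * (n + 1) / 2) * tP n ∈ Jid n k :=
    Iid_le_Jid (Ideal.subset_span (Or.inl (Or.inl rfl)))
  have hsum : ∑ i ∈ Icc 1 n, xP n i = ∑ i : Fin n, X (R := ℚ) i.succ := by
    simp_rw [← xP_succ, Fin.sum_univ_eq_sum_range (fun i => xP n (i + 1)), range_eq_Ico,
      sum_Ico_add' (xP n), zero_add, Ico_add_one_right_eq_Icc]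
  simpa [hsum] using
    (Jid n k).add_mem hgen ((Jid n k).mul_mem_left (C ((n : ℚ) * (n + 1) / 2)) tP_mem_Jid)

theorem xP_sq_mem_Jid {i : ℕ} (hi : i ≤ n) : xP n i ^ 2 ∈ Jid n k := by
  induction i with
  | zero => simp [xP_zero]
  | succ i ih =>
    have hgen : (xP n (i + 1) + xP n i - C ((n : ℚ) - k + (i + 1 : ℕ)) * tP n) *
        (xP n (i + 1) - xP n i - tP n) ∈ Jid n k :=
      Iid_le_Jid (Ideal.subset_span (Or.inl (Or.inr ⟨i + 1, by omega, hi, rfl⟩)))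
    set c := C ((n : ℚ) - k + (i + 1 : ℕ))
    have hsq : xP n (i + 1) ^ 2 = (xP n (i + 1) + xP n i - c * tP n) *
        (xP n (i + 1) - xP n i - tP n) + xP n i ^ 2 +
          tP n * (xP n (i + 1) + xP n i + c * xP n (i + 1) - c * xP n i - c * tP n) := by
      ring
    rw [hsq]
    exact add_mem (add_mem hgen (ih (by omega))) (Ideal.mul_mem_right _ _ tP_mem_Jid)

theorem X_succ_sq_mem_Jid (i : Fin n) : X (R := ℚ) i.succ ^ 2 ∈ Jid n k :=
  xP_succ i ▸ xP_sq_mem_Jid i.2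

theorem xMonomial_mem_Jid_of_card_eq {S : Finset (Fin n)} (hS : #S = k + 1) :
    xMonomial n S ∈ Jid n k := by
  set f := S.orderEmbOfFin hS
  let gen := ∏ j : Fin (k + 1), (xP n (f j + 1) - C (((f j + 1 : ℕ) : ℚ) - (j : ℕ)) * tP n)
  have hgen : gen ∈ Jid n k := Iid_le_Jid <| Ideal.subset_span <| Or.inr
    ⟨fun j => f j + 1, fun a b hab => Nat.succ_lt_succ (f.strictMono hab), Nat.le_add_left 1 _,
      Nat.succ_le_of_lt (f _).2, rfl⟩
  have hmod : xMonomial n S - gen ∈ Ideal.span {tP n} := by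
    rw [← Ideal.Quotient.eq, xMonomial, ← map_orderEmbOfFin_univ S hS, prod_map, map_prod,
      map_prod]
    refine prod_congr rfl fun j _ => ?_
    rw [map_sub, map_mul, Ideal.Quotient.eq_zero_iff_mem.2 (Ideal.mem_span_singleton_self _),
      mul_zero, sub_zero, ← xP_succ]
    rfl
  simpa using add_mem hgen (Ideal.mem_sup_right hmod : _ ∈ Jid n k)

theorem xMonomial_mem_Jid {S : Finset (Fin n)} (hS : k < #S) : xMonomial n S ∈ Jid n k := by
  obtain ⟨T, hTS, hT⟩ := exists_subset_card_eq (show k + 1 ≤ #S from hS)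
  rw [xMonomial, ← prod_sdiff hTS]
  exact Ideal.mul_mem_left _ _ (xMonomial_mem_Jid_of_card_eq hT)

theorem X_succ_mul_xMonomial_of_notMem {S : Finset (Fin n)} {i : Fin n} (hi : i ∉ S) :
    X i.succ * xMonomial n S = xMonomial n (insert i S) :=
  (prod_insert hi).symm

theorem X_succ_mul_xMonomial_of_mem {S : Finset (Fin n)} {i : Fin n} (hi : i ∈ S) :
    X i.succ * xMonomial n S = X i.succ ^ 2 * xMonomial n (S.erase i) := by
  rw [xMonomial, ← mul_prod_erase S _ hi, xMonomial]
  ring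

theorem sum_xMonomial_insert_mem_Jid (S : Finset (Fin n)) :
    ∑ i ∈ Sᶜ, xMonomial n (insert i S) ∈ Jid n k := by
  have hsplit : (∑ i : Fin n, X i.succ) * xMonomial n S =
      ∑ i ∈ Sᶜ, xMonomial n (insert i S) + ∑ i ∈ S, X i.succ ^ 2 * xMonomial n (S.erase i) := by
    rw [sum_mul, ← sum_compl_add_sum S]
    congr 1
    · exact sum_congr rfl fun i hi => X_succ_mul_xMonomial_of_notMem (mem_compl.1 hi)
    · exact sum_congr rfl fun i hi => X_succ_mul_xMonomial_of_mem hi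
  have := sub_mem (Ideal.mul_mem_right (xMonomial n S) _ sum_X_succ_mem_Jid)
    (sum_mem fun i _ => Ideal.mul_mem_right _ _ (X_succ_sq_mem_Jid i) :
      ∑ i ∈ S, X i.succ ^ 2 * xMonomial n (S.erase i) ∈ Jid n k)
  rwa [hsplit, add_sub_cancel_right] at this

theorem span_xMonomial_eq_top :
    Submodule.span ℚ (Set.range fun S : {S : Finset (Fin n) // #S ≤ k} =>
      Ideal.Quotient.mkₐ ℚ (Jid n k) (xMonomial n S)) = ⊤ := by
  set π := Ideal.Quotient.mkₐ ℚ (Jid n k)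
  set N := Submodule.span ℚ
    (Set.range fun S : {S : Finset (Fin n) // #S ≤ k} => π (xMonomial n S))
  have hJ : ∀ p ∈ Jid n k, π p ∈ N := fun p hp => by
    rw [Ideal.Quotient.mkₐ_eq_mk, Ideal.Quotient.eq_zero_iff_mem.2 hp]
    exact N.zero_mem
  have hmon : ∀ S : Finset (Fin n), π (xMonomial n S) ∈ N := by
    intro S
    by_cases hS : #S ≤ k
    · exact Submodule.subset_span ⟨⟨S, hS⟩, rfl⟩
    · exact hJ _ (xMonomial_mem_Jid (by omega))
  have hX : ∀ j, ∀ x ∈ N, π (X j) * x ∈ N := by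
    intro j x hx
    induction hx using Submodule.span_induction with
    | mem _ h =>
      obtain ⟨⟨S, -⟩, rfl⟩ := h
      rw [← map_mul]
      refine Fin.cases ?_ (fun i => ?_) j
      · exact hJ (tP n * _) (Ideal.mul_mem_right _ _ tP_mem_Jid)
      by_cases hi : i ∈ S
      · rw [X_succ_mul_xMonomial_of_mem hi]
        exact hJ _ (Ideal.mul_mem_right _ _ (X_succ_sq_mem_Jid i))
      · rw [X_succ_mul_xMonomial_of_notMem hi]
        exact hmon _
    | zero => simp
    | add x y _ _ hx hy => rw [mul_add]; exact add_mem hx hy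
    | smul c x _ hx => rw [mul_smul_comm]; exact N.smul_mem c hx
  rw [eq_top_iff]
  rintro x -
  obtain ⟨p, rfl⟩ := Ideal.Quotient.mkₐ_surjective ℚ _ x
  induction p using MvPolynomial.induction_on with
  | C a =>
    have hC : π (C a) = a • π (xMonomial n ∅) := by
      rw [xMonomial, prod_empty, map_one, ← algebraMap_eq, AlgHom.commutes,
        Algebra.algebraMap_eq_smul_one]
    exact hC ▸ N.smul_mem a (hmon ∅)
  | add p q hp hq => rw [map_add]; exact add_mem hp hq
  | mul_X p j hp => rw [map_mul, mul_comm]; exact hX j _ hp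

end Ideals

section Homogeneity

attribute [local instance] MvPolynomial.gradedAlgebra

variable {n k : ℕ}

theorem isHomogeneous_xP (i : ℕ) : (xP n i).IsHomogeneous 1 := by
  unfold xP
  split_ifs
  · exact isHomogeneous_X _ _
  · exact isHomogeneous_zero _ _ _

theorem isHomogeneous_C_mul_tP (c : ℚ) : (C c * tP n).IsHomogeneous 1 := by
  simpa [tP] using (isHomogeneous_C _ c).mul (isHomogeneous_X ℚ (0 : Fin (n + 1)))

theorem isHomogeneous_xMonomial (S : Finset (Fin n)) : (xMonomial n S).IsHomogeneous #S := by
  simpa [xMonomial] using IsHomogeneous.prod S _ (fun _ => 1) fun i _ => isHomogeneous_X ℚ i.succ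

theorem Iid_isHomogeneous : (Iid n k).IsHomogeneous (homogeneousSubmodule (Fin (n + 1)) ℚ) := by
  refine Ideal.homogeneous_span _ _ ?_
  rintro p ((rfl | ⟨i, -, -, rfl⟩) | ⟨m, -, -, -, rfl⟩)
  · exact ⟨1, (IsHomogeneous.sum _ _ _ fun i _ => isHomogeneous_xP i).sub
      (isHomogeneous_C_mul_tP _)⟩
  · exact ⟨1 + 1, (((isHomogeneous_xP i).add (isHomogeneous_xP _)).sub
      (isHomogeneous_C_mul_tP _)).mul (((isHomogeneous_xP i).sub (isHomogeneous_xP _)).sub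
        (isHomogeneous_X ℚ 0))⟩
  · refine ⟨k + 1, ?_⟩
    have := IsHomogeneous.prod univ _ (fun _ => 1) fun j _ =>
      (isHomogeneous_xP (m j)).sub (isHomogeneous_C_mul_tP (n := n) ((m j : ℚ) - (j : ℕ)))
    rwa [sum_const, card_univ, Fintype.card_fin, smul_eq_mul, mul_one] at this

end Homogeneity

section Generators

variable {n k : ℕ}

theorem exists_xMonomial_family_spanning_mod_Jid (hk : 2 * k ≤ n) :
    ∃ (κ : Type) (_ : Fintype κ) (S : κ → Finset (Fin n)), Fintype.card κ ≤ n.choose k ∧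
      ∀ p, ∃ c : κ → ℚ, p - ∑ i, c i • xMonomial n (S i) ∈ Jid n k := by
  set π := Ideal.Quotient.mkₐ ℚ (Jid n k)
  have hdim := finrank_le_choose_of_sum_insert_eq_zero (K := ℚ) (by simpa using hk)
    (fun S => π (xMonomial n S)) span_xMonomial_eq_top fun S _ => by
      rw [← map_sum]
      exact Ideal.Quotient.eq_zero_iff_mem.2 (sum_xMonomial_insert_mem_Jid S)
  obtain ⟨κ, a, ha, hspan, hli⟩ :=
    exists_linearIndependent' ℚ fun S : {S : Finset (Fin n) // #S ≤ k} => π (xMonomial n S)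
  rw [span_xMonomial_eq_top] at hspan
  have : Finite κ := Finite.of_injective a ha
  let _ := Fintype.ofFinite κ
  refine ⟨κ, inferInstance, fun i => a i, ?_, fun p => ?_⟩
  · rw [← finrank_span_eq_card hli, hspan, finrank_top]
    simpa using hdim
  · obtain ⟨c, hc⟩ := (Submodule.mem_span_range_iff_exists_fun ℚ).1
      (hspan ▸ Submodule.mem_top : π p ∈ Submodule.span ℚ _)
    refine ⟨c, Ideal.Quotient.eq_zero_iff_mem.1 ?_⟩
    rw [← Ideal.Quotient.mkₐ_eq_mk ℚ, map_sub, map_sum, ← hc]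
    simp [π]

attribute [local instance] MvPolynomial.gradedAlgebra in
theorem exists_sum_aeval_mul_xMonomial_sub_mem_Iid (hk : 2 * k ≤ n) :
    ∃ (κ : Type) (_ : Fintype κ) (S : κ → Finset (Fin n)), Fintype.card κ ≤ n.choose k ∧
      ∀ p, ∃ c : κ → Polynomial ℚ,
        p - ∑ i, Polynomial.aeval (tP n) (c i) * xMonomial n (S i) ∈ Iid n k := by
  obtain ⟨κ, _, S, hκ, hS⟩ := exists_xMonomial_family_spanning_mod_Jid hk
  exact ⟨κ, inferInstance, S, hκ, exists_sum_aeval_mul_sub_mem_of_isHomogeneous _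
    Iid_isHomogeneous one_pos (isHomogeneous_X ℚ 0) (fun i => isHomogeneous_xMonomial (S i)) hS⟩

end Generators

/-- The quotient `ℚ[x₁,…,xₙ,t]/I` is generated by at most `C(n,k)` elements as
a `ℚ[t]`-module (the module structure induced by `t ↦ t̄`); in particular its
rank over `ℚ[t]` is at most `C(n,k)`. -/
theorem quotient_Iid_generated_by_choose (n k : ℕ) (h : 2 * k ≤ n) :
    letI : Module (Polynomial ℚ) (MvPolynomial (Fin (n + 1)) ℚ ⧸ Iid n k) :=
      Module.compHom _
        (Polynomial.aeval (Ideal.Quotient.mk (Iid n k) (tP n))).toRingHom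
    (∃ G : Finset (MvPolynomial (Fin (n + 1)) ℚ ⧸ Iid n k),
        G.card ≤ n.choose k ∧
          Submodule.span (Polynomial ℚ)
            (G : Set (MvPolynomial (Fin (n + 1)) ℚ ⧸ Iid n k)) = ⊤) ∧
      Module.rank (Polynomial ℚ) (MvPolynomial (Fin (n + 1)) ℚ ⧸ Iid n k) ≤
        (n.choose k : Cardinal) := by
  classical
  let : Module (Polynomial ℚ) (MvPolynomial (Fin (n + 1)) ℚ ⧸ Iid n k) :=
    Module.compHom _ (Polynomial.aeval (Ideal.Quotient.mk (Iid n k) (tP n))).toRingHom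
  obtain ⟨κ, _, S, hκ, hgen⟩ := exists_sum_aeval_mul_xMonomial_sub_mem_Iid h
  set G := univ.image fun i => Ideal.Quotient.mk (Iid n k) (xMonomial n (S i))
  have hG : Submodule.span (Polynomial ℚ) (G : Set (MvPolynomial (Fin (n + 1)) ℚ ⧸ Iid n k)) =
      ⊤ := by
    rw [eq_top_iff]
    rintro x -
    obtain ⟨p, rfl⟩ := Ideal.Quotient.mk_surjective x
    obtain ⟨c, hc⟩ := hgen p
    rw [coe_image, coe_univ, Set.image_univ, Submodule.mem_span_range_iff_exists_fun]
    refine ⟨c, (sub_eq_zero.1 ?_).symm⟩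
    rw [← Ideal.Quotient.eq_zero_iff_mem.2 hc, map_sub, map_sum, sub_right_inj]
    refine sum_congr rfl fun i _ => ?_
    change Polynomial.aeval (Ideal.Quotient.mk (Iid n k) (tP n)) (c i) * _ = _
    rw [← Ideal.Quotient.mkₐ_eq_mk ℚ, Polynomial.aeval_algHom_apply, map_mul]
  have hGcard : G.card ≤ n.choose k := card_image_le.trans hκ
  refine ⟨⟨G, hGcard, hG⟩, ?_⟩
  have hrank := rank_span_finset_le (R := Polynomial ℚ) G
  rw [hG, rank_top] at hrank
  exact hrank.trans (Nat.cast_le.2 hGcard)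
end
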